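/- Let G = (V, E) be a multigraph and k ∈ ℤ_{>0}. Then G is a k-trail if and only if the vector λ ∈ ℤ_{>0}^V defined by λ(v) = ⌈deg_G(v)/k⌉ for all v ∈ V is a feasible multiplicity vector for G. -/

import Mathlib

/-- A multigraph on vertex type `V`: a finite multiset of unordered pairs of
vertices (loops and parallel edges allowed). -/
structure Multigraph (V : Type) where
  edges : Multiset (Sym2 V)

namespace Multigraph

open Classical in
/-- The degree of a vertex: number of edge-endpoints at `v`, a loop counting twice. -/
noncomputable def deg {V : Type} (G : Multigraph V) (v : V) : ℕ :=
  (G.edges.map fun e => if e = Sym2.diag v then 2 else if v ∈ e then 1 else 0).sum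

/-- Adjacency in a multigraph. -/
def Adj {V : Type} (G : Multigraph V) (u v : V) : Prop := s(u, v) ∈ G.edges

/-- A multigraph is connected if it has a vertex and any two vertices are joined by a walk. -/
def Connected {V : Type} (G : Multigraph V) : Prop :=
  Nonempty V ∧ ∀ u v : V, Relation.ReflTransGen G.Adj u v

open Classical in
/-- `G` is the homomorphic image of `H` by the onto function `φ`: for all `u v`,
the number of edges of `G` between `u` and `v` equals the number of edges of `H`
whose endpoints are mapped by `φ` to `{u, v}`. -/
def IsHomImage {V W : Type} (G : Multigraph V) (H : Multigraph W) (φ : W → V) : Prop :=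
  Function.Surjective φ ∧
    ∀ u v : V, G.edges.count s(u, v) = (H.edges.map (Sym2.map φ)).count s(u, v)

/-- A tree: a connected multigraph with `|F| = |W| - 1`. -/
def IsTree {W : Type} (H : Multigraph W) : Prop :=
  Connected H ∧ Multiset.card H.edges + 1 = Nat.card W

/-- A multigraph is a `k`-trail if it is the homomorphic image of a (finite)
connected multigraph of maximum degree at most `k`. -/
def IsKTrail {V : Type} (G : Multigraph V) (k : ℕ) : Prop :=
  ∃ (W : Type) (_ : Finite W) (H : Multigraph W) (φ : W → V),
    Connected H ∧ (∀ w, H.deg w ≤ k) ∧ IsHomImage G H φ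

/-- `G` contains a `k`-trail if some submultiset `U` of its edges gives a `k`-trail `(V, U)`. -/
def ContainsKTrail {V : Type} (G : Multigraph V) (k : ℕ) : Prop :=
  ∃ U : Multiset (Sym2 V), U ≤ G.edges ∧ IsKTrail (Multigraph.mk U) k

/-- `lam` is a feasible multiplicity vector for `G`. -/
def FeasibleMult {V : Type} (G : Multigraph V) (lam : V → ℕ) : Prop :=
  ∃ (W : Type) (_ : Finite W) (H : Multigraph W) (φ : W → V),
    Connected H ∧ IsHomImage G H φ ∧ ∀ v : V, Nat.card (φ ⁻¹' {v}) = lam v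

end Multigraph

open Multigraph


/-! If `H` has maximum degree at most `k`, the fibre of `φ` over `v` carries all `deg_G v` edge-ends
at `v`, so it has at least `⌈deg_G v / k⌉` vertices; identifying vertices inside each fibre keeps
`H` connected and brings every fibre down to exactly `⌈deg_G v / k⌉` vertices.

Conversely, suppose every fibre has `⌈deg_G v / k⌉` vertices. While some `w₀` has degree `> k`, its
fibre contains a `w₁` of degree `< k`. Since `deg w₀ ≥ 2`, some edge `w₀x` can be deleted without
separating `w₁` from `w₀`, and replacing it by `xw₁` keeps `H` connected and its image unchanged,
while the total excess `∑ (deg w - k)` drops. -/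

open Finset

theorem Sym2.toMultiset_mk {α : Type} (a b : α) : s(a, b).toMultiset = {a, b} := rfl

theorem Sym2.toMultiset_map {α β : Type} (f : α → β) (e : Sym2 α) :
    (e.map f).toMultiset = e.toMultiset.map f := by
  induction e using Sym2.ind with
  | _ a b => simp [toMultiset_mk]

theorem Multiset.count_map_eq_sum_count {W V : Type} [Fintype W] [DecidableEq W] [DecidableEq V]
    (f : W → V) (s : Multiset W) (v : V) :
    (s.map f).count v = ∑ w with f w = v, s.count w := by
  induction s using Multiset.induction with
  | empty => simp
  | cons a s ih => simp [Multiset.count_cons, ih, Finset.sum_add_distrib, eq_comm]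

theorem Finset.exists_lt_of_sum_le_mul_card {ι : Type} {s : Finset ι} {f : ι → ℕ} {k : ℕ}
    (h : ∑ i ∈ s, f i ≤ k * #s) {a : ι} (ha : a ∈ s) (hfa : k < f a) : ∃ b ∈ s, f b < k := by
  by_contra! hb
  have := Finset.sum_lt_sum (f := fun _ => k) hb ⟨a, ha, hfa⟩
  simp only [sum_const, smul_eq_mul] at this
  linarith

theorem Nat.card_preimage_singleton {W V : Type} [Fintype W] [DecidableEq V] (φ : W → V) (v : V) :
    Nat.card (φ ⁻¹' {v}) = #{w | φ w = v} := by
  rw [← Fintype.card_subtype, ← Nat.card_eq_fintype_card]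
  rfl

theorem Nat.card_sigma_fst_preimage {V : Type} (t : V → ℕ) (v : V) :
    Nat.card (Sigma.fst ⁻¹' {v} : Set (Σ v, Fin (t v))) = t v := by
  rw [← Set.range_sigmaMk, Nat.card_range_of_injective sigma_mk_injective,
    Nat.card_eq_fintype_card, Fintype.card_fin]

theorem exists_surjective_sigma_fst_comp {W V : Type} [Fintype W] [DecidableEq V] (φ : W → V)
    {t : V → ℕ} (ht : ∀ v, 1 ≤ t v ∧ t v ≤ #{w | φ w = v}) :
    ∃ ψ : W → Σ v, Fin (t v), Function.Surjective ψ ∧ Sigma.fst ∘ ψ = φ := by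
  have hg : ∀ v, ∃ g : {w // φ w = v} → Fin (t v), Function.Surjective g := by
    intro v
    have : Nonempty (Fin (t v)) := ⟨⟨0, (ht v).1⟩⟩
    obtain ⟨e⟩ := Function.Embedding.nonempty_of_card_le
      (α := Fin (t v)) (β := {w // φ w = v}) (by simpa [Fintype.card_subtype] using (ht v).2)
    exact ⟨Function.invFun e, Function.invFun_surjective e.injective⟩
  choose g hg using hg
  refine ⟨fun w => ⟨φ w, g (φ w) ⟨w, rfl⟩⟩, fun ⟨v, i⟩ => ?_, rfl⟩
  obtain ⟨⟨w, rfl⟩, rfl⟩ := hg v i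
  exact ⟨w, rfl⟩

namespace Multigraph

variable {V W : Type}

def map (f : W → V) (H : Multigraph W) : Multigraph V := ⟨H.edges.map (Sym2.map f)⟩

def ends (G : Multigraph V) : Multiset V := G.edges.bind Sym2.toMultiset

def deleteEdge [DecidableEq V] (G : Multigraph V) (e : Sym2 V) : Multigraph V :=
  ⟨G.edges.erase e⟩

def addEdge (G : Multigraph V) (e : Sym2 V) : Multigraph V := ⟨e ::ₘ G.edges⟩

abbrev Reachable (G : Multigraph V) : V → V → Prop := Relation.ReflTransGen G.Adj

section Degree

theorem map_map (H : Multigraph W) (f : W → V) {U : Type} (g : V → U) :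
    (H.map f).map g = H.map (g ∘ f) := by
  simp [map, Multiset.map_map, Sym2.map_map]

theorem isHomImage_iff {G : Multigraph V} {H : Multigraph W} {φ : W → V} :
    IsHomImage G H φ ↔ Function.Surjective φ ∧ H.map φ = G := by
  classical
  refine and_congr_right' ⟨fun h => ?_, fun h u v => by rw [← h]; rfl⟩
  obtain ⟨E⟩ := G
  simp only [map, Multigraph.mk.injEq]
  ext z
  induction z using Sym2.ind with
  | _ u v => convert (h u v).symm

theorem deg_eq_count_ends [DecidableEq V] (G : Multigraph V) (v : V) :
    G.deg v = G.ends.count v := by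
  rw [deg, ends, Multiset.count_bind]
  congr 1
  refine Multiset.map_congr rfl fun e _ => ?_
  induction e using Sym2.ind with
  | _ a b =>
    simp only [Sym2.toMultiset_mk, Multiset.insert_eq_cons, Multiset.count_cons,
      Multiset.count_singleton, Sym2.diag, Sym2.eq_iff, Sym2.mem_iff]
    split_ifs <;> grind

theorem ends_map (H : Multigraph W) (f : W → V) : (H.map f).ends = H.ends.map f := by
  simp [ends, map, Multiset.map_bind, Multiset.bind_map, Sym2.toMultiset_map]

theorem ends_addEdge (G : Multigraph V) (e : Sym2 V) :
    (G.addEdge e).ends = e.toMultiset + G.ends :=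
  Multiset.cons_bind _ _ _

theorem deg_map [Fintype W] [DecidableEq V] (H : Multigraph W) (f : W → V) (v : V) :
    (H.map f).deg v = ∑ w with f w = v, H.deg w := by
  classical
  simp only [deg_eq_count_ends, ends_map, Multiset.count_map_eq_sum_count]

theorem deg_eq_card_filter_mem [DecidableEq V] {G : Multigraph V} {w : V}
    (h : s(w, w) ∉ G.edges) : G.deg w = Multiset.card (G.edges.filter (w ∈ ·)) := by
  obtain ⟨E⟩ := G
  induction E using Multiset.induction with
  | empty => simp [deg]
  | cons e E ih =>
    have he : e ≠ Sym2.diag w := fun he => h (he ▸ Multiset.mem_cons_self _ _)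
    have ih := ih fun hE => h (Multiset.mem_cons_of_mem hE)
    by_cases hw : w ∈ e <;> simp_all [deg, add_comm]

end Degree

section Reachable

variable {G : Multigraph V} {u v w : V}

theorem Adj.symm (h : G.Adj u v) : G.Adj v u := by
  rwa [Adj, Sym2.eq_swap]

instance : Std.Symm G.Adj := ⟨fun _ _ => Adj.symm⟩

theorem Reachable.symm (h : G.Reachable u v) : G.Reachable v u :=
  Std.Symm.symm _ _ h

theorem Connected.reachable (hG : G.Connected) (u v : V) : G.Reachable u v :=
  hG.2 u v

theorem connected_of_reachable (w : V) (h : ∀ u, G.Reachable u w) : G.Connected :=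
  ⟨⟨w⟩, fun u v => (h u).trans (h v).symm⟩

theorem Connected.map {H : Multigraph W} (hH : H.Connected) {f : W → V}
    (hf : Function.Surjective f) : (H.map f).Connected := by
  refine ⟨hH.1.map f, fun u v => ?_⟩
  obtain ⟨a, rfl⟩ := hf u
  obtain ⟨b, rfl⟩ := hf v
  refine Relation.ReflTransGen.lift f (fun x y hxy => ?_) _ _ (hH.2 a b)
  exact Multiset.mem_map_of_mem (Sym2.map f) hxy

theorem Connected.one_le_deg [Nontrivial V] (hG : G.Connected) (w : V) : 1 ≤ G.deg w := by
  classical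
  obtain ⟨w', hw'⟩ := exists_ne w
  rcases (hG.2 w w').cases_head with h | ⟨c, hadj, -⟩
  · exact absurd h.symm hw'
  · rw [deg_eq_count_ends, Nat.one_le_iff_ne_zero, Multiset.count_ne_zero]
    exact Multiset.mem_bind.mpr ⟨s(w, c), hadj, by simp [Sym2.toMultiset_mk]⟩

theorem Reachable.addEdge (h : G.Reachable u v) (e : Sym2 V) : (G.addEdge e).Reachable u v :=
  Relation.ReflTransGen.mono (fun _ _ hxy => Multiset.mem_cons_of_mem hxy) _ _ h

theorem reachable_addEdge (u v : V) : (G.addEdge s(u, v)).Reachable u v :=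
  .single (Multiset.mem_cons_self _ _)

variable [DecidableEq V]

theorem Reachable.deleteEdge_of_reachable (h : G.Reachable u v) {a b : V}
    (hab : (G.deleteEdge s(a, b)).Reachable a b) : (G.deleteEdge s(a, b)).Reachable u v := by
  refine Relation.reflTransGen_closed (fun c d hcd => ?_) _ _ h
  by_cases he : s(c, d) = s(a, b)
  · rcases Sym2.eq_iff.mp he with ⟨rfl, rfl⟩ | ⟨rfl, rfl⟩
    exacts [hab, hab.symm]
  · exact .single ((Multiset.mem_erase_of_ne he).mpr hcd)

theorem Reachable.deleteEdge_or (h : G.Reachable u w) (x : V) :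
    (G.deleteEdge s(w, x)).Reachable u w ∨ (G.deleteEdge s(w, x)).Reachable u x := by
  induction h using Relation.ReflTransGen.head_induction_on with
  | refl => exact Or.inl .refl
  | @head a b hab _ ih =>
    by_cases he : s(a, b) = s(w, x)
    · rcases Sym2.eq_iff.mp he with ⟨rfl, -⟩ | ⟨rfl, -⟩
      exacts [Or.inl .refl, Or.inr .refl]
    · have hab' : (G.deleteEdge s(w, x)).Adj a b := (Multiset.mem_erase_of_ne he).mpr hab
      exact ih.imp (.head hab') (.head hab')

theorem Reachable.deleteEdge_or_deleteEdge {f f' : Sym2 V} (hff : f ≠ f') (hf : f ∈ G.edges)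
    (hf' : f' ∈ G.edges) (hwf : w ∈ f) (hwf' : w ∈ f') (h : G.Reachable u w) :
    (G.deleteEdge f).Reachable u w ∨ (G.deleteEdge f').Reachable u w := by
  induction h using Relation.ReflTransGen.head_induction_on with
  | refl => exact Or.inl .refl
  | @head a b hab _ ih =>
    -- a step along one of the two edges at `w` either starts at `w` or ends the walk there
    have finish : ∀ {g g'}, g ≠ g' → g' ∈ G.edges → s(a, b) = g' → w ∈ g' →
        (G.deleteEdge g).Reachable a w := by
      rintro g g' hne hg' rfl hw
      rcases Sym2.mem_iff.mp hw with rfl | rfl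
      · exact .refl
      · exact .single ((Multiset.mem_erase_of_ne hne.symm).mpr hg')
    by_cases h₁ : s(a, b) = f
    · exact Or.inr (finish hff.symm hf h₁ hwf)
    by_cases h₂ : s(a, b) = f'
    · exact Or.inl (finish hff hf' h₂ hwf')
    exact ih.imp (.head ((Multiset.mem_erase_of_ne h₁).mpr hab))
      (.head ((Multiset.mem_erase_of_ne h₂).mpr hab))

theorem exists_reachable_deleteEdge (h : G.Reachable u w) (h2 : 2 ≤ G.deg w) :
    ∃ x, s(w, x) ∈ G.edges ∧ (G.deleteEdge s(w, x)).Reachable u w := by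
  suffices ∃ e ∈ G.edges, w ∈ e ∧ (G.deleteEdge e).Reachable u w by
    obtain ⟨e, he, hw, hr⟩ := this
    obtain ⟨x, rfl⟩ := Sym2.mem_iff_exists.mp hw
    exact ⟨x, he, hr⟩
  by_cases hloop : s(w, w) ∈ G.edges
  · exact ⟨_, hloop, Sym2.mem_mk_left _ _, h.deleteEdge_of_reachable .refl⟩
  set I := G.edges.filter (w ∈ ·)
  have hI : 2 ≤ Multiset.card I := deg_eq_card_filter_mem hloop ▸ h2
  obtain ⟨f, hf⟩ := Multiset.card_pos_iff_exists_mem.mp (by omega : 0 < Multiset.card I)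
  obtain ⟨f', hf'⟩ : ∃ f', f' ∈ I.erase f := Multiset.card_pos_iff_exists_mem.mp
    (by rw [Multiset.card_erase_of_mem hf]; exact Nat.sub_pos_of_lt hI)
  obtain ⟨hfE, hwf⟩ := Multiset.mem_filter.mp hf
  by_cases hff : f' = f
  · -- a second copy of `f` survives its deletion
    subst hff
    have hf'E : f' ∈ G.edges.erase f' :=
      Multiset.mem_of_le (Multiset.erase_le_erase f' (Multiset.filter_le _ _)) hf'
    obtain ⟨x, rfl⟩ := Sym2.mem_iff_exists.mp hwf
    exact ⟨_, hfE, hwf, h.deleteEdge_of_reachable (.single hf'E)⟩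
  · obtain ⟨hf'E, hwf'⟩ := Multiset.mem_filter.mp (Multiset.mem_of_mem_erase hf')
    rcases h.deleteEdge_or_deleteEdge (Ne.symm hff) hfE hf'E hwf hwf' with hr | hr
    exacts [⟨f, hfE, hwf, hr⟩, ⟨f', hf'E, hwf', hr⟩]

end Reachable

section Balancing

variable [DecidableEq W] {G : Multigraph W} {w₀ w₁ : W}

theorem Connected.exists_move_endpoint {φ : W → V} (hG : G.Connected) (hφ : φ w₀ = φ w₁)
    (h2 : 2 ≤ G.deg w₀) :
    ∃ G' : Multigraph W, G'.Connected ∧ G'.map φ = G.map φ ∧ w₀ ::ₘ G'.ends = w₁ ::ₘ G.ends := by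
  obtain ⟨x, hx, hreach⟩ := exists_reachable_deleteEdge (hG.reachable w₁ w₀) h2
  have hGx : G = (G.deleteEdge s(w₀, x)).addEdge s(w₀, x) := by
    simp [addEdge, deleteEdge, Multiset.cons_erase hx]
  refine ⟨(G.deleteEdge s(w₀, x)).addEdge s(x, w₁), connected_of_reachable w₀ fun u => ?_, ?_, ?_⟩
  · rcases (hG.reachable u w₀).deleteEdge_or x with hr | hr
    · exact hr.addEdge _
    · exact (hr.addEdge _).trans ((reachable_addEdge x w₁).trans (hreach.addEdge _))
  · conv_rhs => rw [hGx]
    simp [Multigraph.map, addEdge, hφ, Sym2.eq_swap]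
  · conv_rhs => rw [hGx]
    simp [ends_addEdge, Sym2.toMultiset_mk, Multiset.cons_swap]

theorem Connected.exists_deg_le [Fintype W] [DecidableEq V] {φ : W → V} {k : ℕ}
    (hG : G.Connected) (hk : ∀ v, (G.map φ).deg v ≤ k * #{w | φ w = v}) :
    ∃ G' : Multigraph W, G'.Connected ∧ G'.map φ = G.map φ ∧ ∀ w, G'.deg w ≤ k := by
  induction hn : ∑ w, (G.deg w - k) using Nat.strong_induction_on generalizing G with
  | _ n ih =>
  by_cases hle : ∀ w, G.deg w ≤ k
  · exact ⟨G, hG, rfl, hle⟩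
  push Not at hle
  obtain ⟨w₀, hw₀⟩ := hle
  have hfib := hk (φ w₀)
  rw [deg_map] at hfib
  obtain ⟨w₁, hw₁, hlt⟩ := Finset.exists_lt_of_sum_le_mul_card hfib
    (mem_filter.mpr ⟨mem_univ w₀, rfl⟩) hw₀
  have hw₁ : φ w₀ = φ w₁ := ((mem_filter.mp hw₁).2).symm
  have hne : w₀ ≠ w₁ := by rintro rfl; omega
  obtain ⟨G', hG', hmap, hends⟩ := hG.exists_move_endpoint hw₁ (by omega)
  have hdeg : ∀ w, G'.deg w + (if w = w₀ then 1 else 0) = G.deg w + (if w = w₁ then 1 else 0) := by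
    intro w
    simpa [deg_eq_count_ends, Multiset.count_cons, add_comm] using congrArg (Multiset.count w) hends
  have hmono : ∀ w, G'.deg w - k ≤ G.deg w - k := by
    intro w
    have := hdeg w
    split_ifs at this <;> subst_vars <;> omega
  have hlt : ∑ w, (G'.deg w - k) < n := hn ▸ Finset.sum_lt_sum (fun w _ => hmono w)
    ⟨w₀, mem_univ _, by have := hdeg w₀; rw [if_pos rfl, if_neg hne] at this; omega⟩
  obtain ⟨G'', hG'', hmap', hdeg''⟩ := ih _ hlt hG' (hmap ▸ hk) rfl
  exact ⟨G'', hG'', hmap'.trans hmap, hdeg''⟩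

end Balancing

variable {G : Multigraph V} {k : ℕ}

theorem IsKTrail.feasibleMult_ceilDiv (hV : 2 ≤ Nat.card V) (h : G.IsKTrail k) :
    G.FeasibleMult fun v => G.deg v ⌈/⌉ k := by
  classical
  obtain ⟨W, _, H, φ, hH, hdeg, hφ⟩ := h
  obtain ⟨hsurj, rfl⟩ := isHomImage_iff.mp hφ
  have := Fintype.ofFinite W
  have := Finite.of_surjective φ hsurj
  have : Nontrivial W := Finite.one_lt_card_iff_nontrivial.mp
    (hV.trans (Nat.card_le_card_of_surjective φ hsurj))
  obtain ⟨w⟩ := hH.1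
  have hk : 0 < k := (hH.one_le_deg w).trans (hdeg w)
  have ht : ∀ v, 1 ≤ (H.map φ).deg v ⌈/⌉ k ∧ (H.map φ).deg v ⌈/⌉ k ≤ #{w | φ w = v} := by
    intro v
    obtain ⟨w, rfl⟩ := hsurj v
    rw [ceilDiv_le_iff_le_mul hk, deg_map]
    refine ⟨(Nat.le_div_iff_mul_le hk).mpr ?_, ?_⟩
    · have hw : w ∈ ({x | φ x = φ w} : Finset W) := mem_filter.mpr ⟨mem_univ w, rfl⟩
      have := (hH.one_le_deg w).trans (single_le_sum (fun _ _ => Nat.zero_le _) hw)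
      omega
    · rw [mul_comm, ← smul_eq_mul]
      exact sum_le_card_nsmul _ _ _ fun w _ => hdeg w
  obtain ⟨ψ, hψ, hψφ⟩ := exists_surjective_sigma_fst_comp φ ht
  refine ⟨_, inferInstance, H.map ψ, Sigma.fst, hH.map hψ,
    isHomImage_iff.mpr ⟨?_, by rw [map_map, hψφ]⟩, Nat.card_sigma_fst_preimage _⟩
  rw [← hψφ] at hsurj
  exact hsurj.of_comp

theorem FeasibleMult.isKTrail (h : G.FeasibleMult fun v => G.deg v ⌈/⌉ k) : G.IsKTrail k := by
  classical
  obtain ⟨W, _, H, φ, hH, hφ, hcard⟩ := h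
  obtain ⟨hsurj, rfl⟩ := isHomImage_iff.mp hφ
  have := Fintype.ofFinite W
  have hk : 0 < k := by
    obtain ⟨w⟩ := hH.1
    have : Nonempty (φ ⁻¹' {φ w}) := ⟨⟨w, rfl⟩⟩
    refine Nat.pos_of_ne_zero fun hk => (Nat.card_pos (α := φ ⁻¹' {φ w})).ne' ?_
    rw [hcard, hk]
    exact ceilDiv_zero _
  obtain ⟨H', hH', hmap, hdeg⟩ := hH.exists_deg_le (φ := φ) (k := k) fun v => by
    rw [← Nat.card_preimage_singleton φ v, hcard, ← ceilDiv_le_iff_le_mul hk]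
  exact ⟨W, inferInstance, H', φ, hH', hdeg, isHomImage_iff.mpr ⟨hsurj, hmap⟩⟩

end Multigraph

theorem isKTrail_iff_ceil_feasible_general {V : Type}
    (hV : 2 ≤ Nat.card V)
    (G : Multigraph V) (k : ℕ) :
    IsKTrail G k ↔ FeasibleMult G (fun v => (G.deg v + k - 1) / k) := by
  simp_rw [← Nat.ceilDiv_eq_add_pred_div]
  exact ⟨IsKTrail.feasibleMult_ceilDiv hV, FeasibleMult.isKTrail⟩

/-- `G` is a `k`-trail if and only if the vector `λ(v) = ⌈deg_G(v)/k⌉` is a feasible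
multiplicity vector for `G`. -/
theorem isKTrail_iff_ceil_feasible {V : Type} [Finite V]
    (hV : 2 ≤ Nat.card V)
    (G : Multigraph V) (k : ℕ) (hk : 1 ≤ k) :
    IsKTrail G k ↔ FeasibleMult G (fun v => (G.deg v + k - 1) / k) :=
  isKTrail_iff_ceil_feasible_general hV G k
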